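/- Consider a graph G on n vertices with maximum matching M*, and let V_ℓ = {v ∈ V(M*) : deg(v) ≤ 4n^{1-δ}} with |V_ℓ| ≥ |M*|/2. Suppose independently for each vertex v ∈ V_ℓ, its M*-partner is discovered with probability at least 20·n^{-δ}·log n. Then with probability at least 1 - 1/n (given |M*| ≥ n^δ), the number of vertices in V_ℓ whose special edge is discovered is at least 5·n^{-δ}·log n·|M*|, and in particular the discovered edges contain a matching of size at least n^{-δ}·|M*|. -/

import Mathlib

open scoped Classical
open MeasureTheory ProbabilityTheory

set_option maxHeartbeats 1000000 in
/-- Case 1 of the algorithm's analysis (Claim 5.3): `M` is a (maximum) matching,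
`Vℓ ⊆ V(M)` with `|Vℓ| ≥ |M|/2`, each `v ∈ Vℓ` has its special (matching) edge
`special v ∈ M` discovered independently with probability at least `20·n^{-δ}·log n`.
If `|M| ≥ n^δ`, then with probability at least `1 - 1/n` the number of vertices of `Vℓ`
whose special edge is discovered is at least `5·n^{-δ}·(log n)·|M|`, and in particular
the set of discovered special edges is a matching of size at least `n^{-δ}·|M|`. -/
theorem case_one_discovery {V : Type*} [Fintype V] [DecidableEq V]
    {Ω : Type*} [MeasureSpace Ω] [IsProbabilityMeasure (ℙ : Measure Ω)]
    (G : SimpleGraph V) (n : ℕ) (δ : ℝ) (hδ0 : 0 < δ) (hδ1 : δ < 1)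
    (M : Finset (Sym2 V))
    (hM_edges : ∀ e ∈ M, e ∈ G.edgeSet)
    (hM_matching : ∀ e ∈ M, ∀ f ∈ M, e ≠ f → ∀ v : V, v ∈ e → v ∉ f)
    (hMsize : (n : ℝ) ^ δ ≤ (M.card : ℝ))
    (Vℓ : Finset V)
    (special : V → Sym2 V)
    (hspecial : ∀ v ∈ Vℓ, special v ∈ M ∧ v ∈ special v)
    (hVℓ : (M.card : ℝ) / 2 ≤ (Vℓ.card : ℝ))
    (D : V → Set Ω) (hDmeas : ∀ v, MeasurableSet (D v))
    (hindep : iIndepSet D ℙ)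
    (hprob : ∀ v ∈ Vℓ, ENNReal.ofReal (20 * (n : ℝ) ^ (-δ) * Real.log n) ≤ ℙ (D v)) :
    ENNReal.ofReal (1 - 1 / (n : ℝ))
      ≤ ℙ {ω | 5 * (n : ℝ) ^ (-δ) * Real.log n * (M.card : ℝ)
              ≤ ((Vℓ.filter (fun v => ω ∈ D v)).card : ℝ)
            ∧ (n : ℝ) ^ (-δ) * (M.card : ℝ)
              ≤ (((Vℓ.filter (fun v => ω ∈ D v)).image special).card : ℝ)} := by
  rcases Nat.lt_or_ge n 2 with hn | hn
  · interval_cases n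
    · -- n = 0
      have h0 : ((0 : ℕ) : ℝ) ^ (-δ) = 0 := by
        rw [Nat.cast_zero]; exact Real.zero_rpow (by linarith)
      have hset : {ω : Ω | 5 * ((0:ℕ) : ℝ) ^ (-δ) * Real.log ((0:ℕ) : ℝ) * (M.card : ℝ)
              ≤ ((Vℓ.filter (fun v => ω ∈ D v)).card : ℝ)
            ∧ ((0:ℕ) : ℝ) ^ (-δ) * (M.card : ℝ)
              ≤ (((Vℓ.filter (fun v => ω ∈ D v)).image special).card : ℝ)} = Set.univ := by
        ext ω
        simp only [Set.mem_setOf_eq, Set.mem_univ, iff_true, Nat.cast_zero,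
          Real.zero_rpow (show (-δ) ≠ 0 by linarith), Real.log_zero]
        norm_num
      rw [hset, measure_univ]
      rw [Nat.cast_zero, div_zero, sub_zero, ENNReal.ofReal_one]
    · -- n = 1
      have h1 : (1 : ℝ) - 1 / ((1:ℕ) : ℝ) = 0 := by norm_num
      rw [h1, ENNReal.ofReal_zero]
      exact zero_le
  · -- main case : n ≥ 2
    set r : ℝ := (n : ℝ) ^ (-δ) with hr_def
    set L : ℝ := Real.log n with hL_def
    set m : ℝ := (M.card : ℝ) with hm_def
    set N : ℝ := (Vℓ.card : ℝ) with hN_def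
    set a : ℝ := 5 * r * L * m with ha_def
    set p : ℝ := 20 * r * L with hp_def
    have hn2 : (2 : ℝ) ≤ (n : ℝ) := by exact_mod_cast hn
    have hnpos : (0 : ℝ) < (n : ℝ) := by linarith
    have hr : 0 < r := Real.rpow_pos_of_pos hnpos _
    have hL2 : Real.log 2 ≤ L := Real.log_le_log (by norm_num) hn2
    have hL04 : (0.4 : ℝ) ≤ L := by
      have := Real.log_two_gt_d9; linarith
    have hLpos : 0 < L := by linarith
    have hm : 0 < m := lt_of_lt_of_le (Real.rpow_pos_of_pos hnpos δ) hMsize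
    have hrm : 1 ≤ r * m := by
      have h1 : r * (n : ℝ) ^ δ = 1 := by
        rw [hr_def, ← Real.rpow_add hnpos]
        simp
      nlinarith [hr]
    have hp0 : 0 ≤ p := by positivity
    -- indicator random variables
    set X : V → Ω → ℝ := fun v => (D v).indicator (fun _ => 1) with hX_def
    have hXmeas : ∀ v, Measurable (X v) := fun v => measurable_const.indicator (hDmeas v)
    have hXval : ∀ v ω, X v ω = if ω ∈ D v then 1 else 0 := by
      intro v ω; by_cases h : ω ∈ D v <;> simp [hX_def, h]
    have hScard : ∀ ω, (∑ v ∈ Vℓ, X v) ω = ((Vℓ.filter (fun v => ω ∈ D v)).card : ℝ) := by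
      intro ω
      rw [Finset.sum_apply, Finset.card_filter]
      push_cast
      exact Finset.sum_congr rfl fun v _ => by rw [hXval]
    have hSmeas : Measurable (∑ v ∈ Vℓ, X v) := by
      have : (∑ v ∈ Vℓ, X v) = fun ω => ∑ v ∈ Vℓ, X v ω := by
        funext ω; exact Finset.sum_apply _ _ _
      rw [this]
      exact Finset.measurable_sum _ fun v _ => hXmeas v
    set q : V → ℝ := fun v => (ℙ (D v)).toReal with hq_def
    have hq0 : ∀ v, 0 ≤ q v := fun v => ENNReal.toReal_nonneg
    have hqp : ∀ v ∈ Vℓ, p ≤ q v := by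
      intro v hv
      have h := ENNReal.toReal_mono (measure_ne_top _ _) (hprob v hv)
      rwa [ENNReal.toReal_ofReal hp0] at h
    have hXint : ∀ v, Integrable (X v) ℙ := fun v =>
      (integrable_const (1 : ℝ)).indicator (hDmeas v)
    have hexp_eq : ∀ (t : ℝ) v, (fun ω => Real.exp (t * X v ω))
        = fun ω => (Real.exp t - 1) * X v ω + 1 := by
      intro t v; funext ω
      by_cases h : ω ∈ D v <;> simp [hXval, h]
    have hint : ∀ (t : ℝ) v, Integrable (fun ω => Real.exp (t * X v ω)) ℙ := by
      intro t v
      rw [hexp_eq]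
      exact ((hXint v).const_mul _).add (integrable_const 1)
    have hIX : ∀ v, ∫ ω, X v ω ∂ℙ = q v := by
      intro v
      have := integral_indicator_one (μ := (ℙ : Measure Ω)) (hDmeas v)
      exact this
    have hmgf : ∀ (t : ℝ) v, mgf (X v) ℙ t = (Real.exp t - 1) * q v + 1 := by
      intro t v
      rw [mgf, hexp_eq]
      rw [integral_add (((hXint v).const_mul _)) (integrable_const 1),
        integral_const_mul, hIX]
      simp
    have hiIndep : iIndepFun X ℙ :=
      hindep.iIndepFun_indicator
    have hmgfS : mgf (∑ v ∈ Vℓ, X v) ℙ (-1) = ∏ v ∈ Vℓ, mgf (X v) ℙ (-1) :=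
      hiIndep.mgf_sum hXmeas Vℓ
    have he25 : Real.exp (-1) ≤ 2 / 5 := by
      rw [Real.exp_neg]
      have h := Real.exp_one_gt_d9
      have h2 : (0 : ℝ) < Real.exp 1 := Real.exp_pos 1
      rw [inv_le_comm₀ (by positivity) (by norm_num)]
      linarith
    have hfac : ∀ v ∈ Vℓ, mgf (X v) ℙ (-1) ≤ Real.exp (-(3 / 5) * p) := by
      intro v hv
      rw [hmgf]
      have h1 := Real.add_one_le_exp ((Real.exp (-1) - 1) * q v)
      have h2 : (Real.exp (-1) - 1) * q v ≤ -(3 / 5) * p := by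
        have hqv := hqp v hv
        have hq0v := hq0 v
        nlinarith
      have h3 := Real.exp_le_exp.mpr h2
      linarith
    have hprodS : mgf (∑ v ∈ Vℓ, X v) ℙ (-1) ≤ Real.exp (-(3 / 5) * p * N) := by
      rw [hmgfS]
      calc ∏ v ∈ Vℓ, mgf (X v) ℙ (-1)
          ≤ ∏ _v ∈ Vℓ, Real.exp (-(3 / 5) * p) :=
            Finset.prod_le_prod (fun v _ => mgf_nonneg) hfac
        _ = Real.exp (-(3 / 5) * p) ^ Vℓ.card := Finset.prod_const _
        _ = Real.exp (-(3 / 5) * p * N) := by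
            rw [← Real.exp_nat_mul]; congr 1; rw [hN_def]; ring
    have hintS : Integrable (fun ω => Real.exp ((-1) * (∑ v ∈ Vℓ, X v) ω)) ℙ :=
      hiIndep.integrable_exp_mul_sum hXmeas fun v _ => hint (-1) v
    have hcher := measure_le_le_exp_mul_mgf (X := ∑ v ∈ Vℓ, X v) (μ := (ℙ : Measure Ω))
      a (by norm_num : (-1 : ℝ) ≤ 0) hintS
    have hexp_final : Real.exp (-(-1 : ℝ) * a) * Real.exp (-(3 / 5) * p * N)
        ≤ 1 / (n : ℝ) := by
      rw [← Real.exp_add]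
      have harg : -(-1 : ℝ) * a + -(3 / 5) * p * N ≤ -L := by
        have h6 : 6 * r * L * m ≤ 3 / 5 * p * N := by
          have h := mul_le_mul_of_nonneg_left hVℓ
            (show (0 : ℝ) ≤ 12 * (r * L) by positivity)
          rw [hp_def]; rw [hm_def] at h; linarith
        have hLrm : L ≤ r * L * m := by nlinarith [hLpos.le, hrm]
        rw [ha_def]; linarith
      calc Real.exp (-(-1 : ℝ) * a + -(3 / 5) * p * N) ≤ Real.exp (-L) :=
            Real.exp_le_exp.mpr harg
        _ = 1 / (n : ℝ) := by
            rw [Real.exp_neg, hL_def, Real.exp_log hnpos, one_div]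
    have htail : (ℙ {ω | (∑ v ∈ Vℓ, X v) ω ≤ a}).toReal ≤ 1 / (n : ℝ) := by
      refine hcher.trans ?_
      refine le_trans ?_ hexp_final
      have := mul_le_mul_of_nonneg_left hprodS (le_of_lt (Real.exp_pos (-(-1 : ℝ) * a)))
      linarith
    have hTail2 : ℙ {ω | (∑ v ∈ Vℓ, X v) ω ≤ a} ≤ ENNReal.ofReal (1 / (n : ℝ)) :=
      (ENNReal.le_ofReal_iff_toReal_le (measure_ne_top _ _) (by positivity)).mpr htail
    -- the deterministic part and the event inclusion
    have hsub : {ω | a ≤ (∑ v ∈ Vℓ, X v) ω}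
        ⊆ {ω | 5 * (n : ℝ) ^ (-δ) * Real.log n * (M.card : ℝ)
              ≤ ((Vℓ.filter (fun v => ω ∈ D v)).card : ℝ)
            ∧ (n : ℝ) ^ (-δ) * (M.card : ℝ)
              ≤ (((Vℓ.filter (fun v => ω ∈ D v)).image special).card : ℝ)} := by
      intro ω hω
      simp only [Set.mem_setOf_eq] at hω ⊢
      rw [hScard ω] at hω
      refine ⟨hω, ?_⟩
      set F := Vℓ.filter (fun v => ω ∈ D v) with hF_def
      have hfib : ∀ e ∈ F.image special, (F.filter (fun v => special v = e)).card ≤ 2 := by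
        intro e _
        induction e using Sym2.ind with
        | _ x y =>
          refine le_trans (Finset.card_le_card (t := {x, y}) ?_) ?_
          · intro v hv
            simp only [Finset.mem_filter] at hv
            have hvV : v ∈ Vℓ := (Finset.mem_filter.mp hv.1).1
            have hmem : v ∈ special v := (hspecial v hvV).2
            rw [hv.2] at hmem
            rw [Sym2.mem_iff] at hmem
            simpa [Finset.mem_insert, Finset.mem_singleton] using hmem
          · exact (Finset.card_insert_le _ _).trans (by simp)
      have h2 : F.card ≤ 2 * (F.image special).card :=
        Finset.card_le_mul_card_image F 2 hfib
      have h2' : (F.card : ℝ) ≤ 2 * ((F.image special).card : ℝ) := by exact_mod_cast h2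
      have h3 : r * m ≤ 5 / 2 * (r * L * m) := by
        nlinarith [mul_nonneg hr.le hm.le, hL04]
      have ha' : 5 * r * L * m ≤ (F.card : ℝ) := hω
      linarith
    have hmeaslt : MeasurableSet {ω | (∑ v ∈ Vℓ, X v) ω < a} :=
      measurableSet_lt hSmeas measurable_const
    have hcompl : {ω | a ≤ (∑ v ∈ Vℓ, X v) ω} = {ω | (∑ v ∈ Vℓ, X v) ω < a}ᶜ := by
      ext ω; simp [not_lt]
    have hE : ENNReal.ofReal (1 - 1 / (n : ℝ)) ≤ ℙ {ω | a ≤ (∑ v ∈ Vℓ, X v) ω} := by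
      rw [hcompl, prob_compl_eq_one_sub hmeaslt]
      have hlt : ℙ {ω | (∑ v ∈ Vℓ, X v) ω < a} ≤ ENNReal.ofReal (1 / (n : ℝ)) := by
        have hsub2 : {ω | (∑ v ∈ Vℓ, X v) ω < a} ⊆ {ω | (∑ v ∈ Vℓ, X v) ω ≤ a} := by
          intro ω h
          simp only [Set.mem_setOf_eq] at h ⊢
          exact le_of_lt h
        exact le_trans (measure_mono hsub2) hTail2
      calc ENNReal.ofReal (1 - 1 / (n : ℝ))
          = 1 - ENNReal.ofReal (1 / (n : ℝ)) := by
            rw [ENNReal.ofReal_sub _ (by positivity), ENNReal.ofReal_one]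
        _ ≤ 1 - ℙ {ω | (∑ v ∈ Vℓ, X v) ω < a} := tsub_le_tsub_left hlt 1
    exact le_trans hE (measure_mono hsub)
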